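/- arXiv:2502.09840 — 5 statements merged into one kernel-verified Lean document; each statement's English description precedes it below -/
import Mathlib

section
/- (Neumann trick.) Let M⋆ ∈ ℝ^{n×n} be a rank-r symmetric matrix with spectral decomposition M⋆ = Σ_{j=1}^r λ⋆_j u⋆_j u⋆_jᵀ, where u⋆_1,…,u⋆_r are orthonormal, and let M = M⋆ + H for a (possibly asymmetric) matrix H ∈ ℝ^{n×n}. Suppose λ_l is an eigenvalue of M with eigenvector u_l and that ‖H‖ < |λ_l|. Then u_l = Σ_{j=1}^r (λ⋆_j / λ_l)(u⋆_jᵀ u_l) · Σ_{k=0}^∞ λ_l^{−k} H^k u⋆_j, where the series converges absolutely. In particular, if r = 1 with M⋆ = λ⋆ u⋆ u⋆ᵀ and ‖H‖ < |λ_1|, then u_1 = (λ⋆/λ_1)(u⋆ᵀ u_1) Σ_{k=0}^∞ λ_1^{−k} H^k u⋆. -/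
/-!
Put `A = λ⁻¹ H`. The eigen-equation reads `(1 - A) u = λ⁻¹ M⋆ u`, and the rank-`r` form of `M⋆`
gives `M⋆ u = ∑ⱼ λ⋆ⱼ (u⋆ⱼᵀ u) u⋆ⱼ`. In the `ℓ₂` operator norm `‖A‖ < 1`, so the Neumann series
`∑ₖ Aᵏ` converges absolutely in the (complete) matrix algebra and inverts `1 - A`; applying it to
each `u⋆ⱼ` gives the expansion, and `‖Aᵏ v‖ ≤ ‖Aᵏ‖ ‖v‖₂` gives absolute convergence of the vector
series.
-/

open Matrix

noncomputable def opNorm {n : ℕ} (A : Matrix (Fin n) (Fin n) ℝ) : ℝ :=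
  ‖LinearMap.toContinuousLinearMap (Matrix.toEuclideanLin A)‖

namespace Matrix

lemma sum_smul_vecMulVec_mulVec {ι m n R : Type*} [Fintype n] [CommSemiring R]
    (s : Finset ι) (c : ι → R) (x : ι → m → R) (y : ι → n → R) (u : n → R) :
    (∑ j ∈ s, c j • vecMulVec (x j) (y j)) *ᵥ u = ∑ j ∈ s, (c j * (y j ⬝ᵥ u)) • x j := by
  simp only [sum_mulVec, smul_mulVec, vecMulVec_mulVec, op_smul_eq_smul, smul_smul]

open scoped Matrix.Norms.L2Operator

lemma opNorm_eq_l2_opNorm {n : ℕ} (A : Matrix (Fin n) (Fin n) ℝ) : opNorm A = ‖A‖ := rfl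

variable {𝕜 m : Type*} [RCLike 𝕜] [Fintype m] [DecidableEq m]

lemma norm_mulVec_le_l2_opNorm_mul (A : Matrix m m 𝕜) (v : m → 𝕜) :
    ‖A *ᵥ v‖ ≤ ‖A‖ * ‖WithLp.toLp 2 v‖ := by
  refine (pi_norm_le_iff_of_nonneg (by positivity)).2 fun i => ?_
  exact (PiLp.norm_apply_le (WithLp.toLp 2 (A *ᵥ v)) i).trans (l2_opNorm_mulVec A _)

lemma summable_norm_pow_mulVec {A : Matrix m m 𝕜} (hA : ‖A‖ < 1) (v : m → 𝕜) :
    Summable fun k : ℕ => ‖(A ^ k) *ᵥ v‖ :=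
  .of_nonneg_of_le (fun _ => norm_nonneg _) (fun _ => norm_mulVec_le_l2_opNorm_mul _ v)
    ((summable_norm_geometric_of_norm_lt_one hA).mul_right ‖WithLp.toLp 2 v‖)

lemma tsum_pow_mulVec {A : Matrix m m 𝕜} (hA : ‖A‖ < 1) (v : m → 𝕜) :
    (∑' k : ℕ, A ^ k) *ᵥ v = ∑' k : ℕ, A ^ k *ᵥ v :=
  (summable_geometric_of_norm_lt_one hA).map_tsum (mulVec.addMonoidHomLeft v)
    (continuous_id.matrix_mulVec continuous_const)

lemma norm_inv_smul_lt_one {A : Matrix m m 𝕜} {c : 𝕜} (h : ‖A‖ < ‖c‖) : ‖c⁻¹ • A‖ < 1 := by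
  rwa [norm_smul, norm_inv, inv_mul_lt_one₀ ((norm_nonneg A).trans_lt h)]

lemma eq_tsum_pow_mulVec_of_one_sub_mulVec_eq {A : Matrix m m 𝕜} (hA : ‖A‖ < 1)
    {u w : m → 𝕜} (h : (1 - A) *ᵥ u = w) : u = (∑' k : ℕ, A ^ k) *ᵥ w := by
  rw [← h, mulVec_mulVec, geom_series_mul_neg A hA, one_mulVec]

end Matrix

theorem stmt1_general {n r : ℕ}
    (lamstar : Fin r → ℝ) (ustar : Fin r → Fin n → ℝ)
    (Mstar H : Matrix (Fin n) (Fin n) ℝ)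
    (hM : Mstar = ∑ j, lamstar j • vecMulVec (ustar j) (ustar j))
    (lam : ℝ) (u : Fin n → ℝ)
    (heig : (Mstar + H).mulVec u = lam • u)
    (hH : opNorm H < |lam|) :
    (∀ j : Fin r, Summable fun k : ℕ => ‖(lam ^ k)⁻¹ • (H ^ k).mulVec (ustar j)‖) ∧
    u = ∑ j : Fin r, ((lamstar j / lam) * (ustar j ⬝ᵥ u)) •
          ∑' k : ℕ, (lam ^ k)⁻¹ • (H ^ k).mulVec (ustar j) := by
  have hlam : lam ≠ 0 := abs_pos.1 ((norm_nonneg _).trans_lt hH)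
  have hA := norm_inv_smul_lt_one (c := lam) (by rwa [Real.norm_eq_abs, ← opNorm_eq_l2_opNorm])
  have hterm (k : ℕ) (v : Fin n → ℝ) : (lam ^ k)⁻¹ • (H ^ k) *ᵥ v = (lam⁻¹ • H) ^ k *ᵥ v := by
    rw [smul_pow, smul_mulVec, inv_pow]
  have hHu : H *ᵥ u = lam • u - Mstar *ᵥ u := by
    rw [add_mulVec] at heig
    exact eq_sub_of_add_eq' heig
  have hresolvent :
      (1 - lam⁻¹ • H) *ᵥ u = ∑ j, (lamstar j / lam * (ustar j ⬝ᵥ u)) • ustar j := by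
    rw [sub_mulVec, one_mulVec, smul_mulVec, hHu, smul_sub, smul_smul, inv_mul_cancel₀ hlam,
      one_smul, sub_sub_cancel, hM, sum_smul_vecMulVec_mulVec, Finset.smul_sum]
    refine Finset.sum_congr rfl fun j _ => ?_
    rw [smul_smul, div_eq_inv_mul, mul_assoc]
  refine ⟨fun j => by simpa only [hterm] using summable_norm_pow_mulVec hA (ustar j), ?_⟩
  refine (eq_tsum_pow_mulVec_of_one_sub_mulVec_eq hA hresolvent).trans ?_
  rw [mulVec_sum]
  refine Finset.sum_congr rfl fun j _ => ?_
  rw [mulVec_smul, tsum_pow_mulVec hA]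
  simp only [hterm]

/-- Neumann trick: if `M⋆ = Σ_j λ⋆_j u⋆_j u⋆_jᵀ` is a rank-r symmetric
matrix with orthonormal `u⋆_j` and nonzero `λ⋆_j`, `M = M⋆ + H`, and `(λ, u)` is an
eigenpair of `M` with `‖H‖ < |λ|`, then the Neumann series converges absolutely and
`u = Σ_j (λ⋆_j/λ)(u⋆_jᵀ u) Σ_{k≥0} λ^{-k} H^k u⋆_j`. -/
theorem stmt1 {n r : ℕ}
    (lamstar : Fin r → ℝ) (ustar : Fin r → Fin n → ℝ)
    (horth : ∀ i j : Fin r, ustar i ⬝ᵥ ustar j = if i = j then 1 else 0)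
    (hnz : ∀ j, lamstar j ≠ 0)
    (Mstar H : Matrix (Fin n) (Fin n) ℝ)
    (hM : Mstar = ∑ j, lamstar j • vecMulVec (ustar j) (ustar j))
    (lam : ℝ) (u : Fin n → ℝ)
    (heig : (Mstar + H).mulVec u = lam • u)
    (hH : opNorm H < |lam|) :
    (∀ j : Fin r, Summable fun k : ℕ => ‖(lam ^ k)⁻¹ • (H ^ k).mulVec (ustar j)‖) ∧
    u = ∑ j : Fin r, ((lamstar j / lam) * (ustar j ⬝ᵥ u)) •
          ∑' k : ℕ, (lam ^ k)⁻¹ • (H ^ k).mulVec (ustar j) :=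
  stmt1_general lamstar ustar Mstar H hM lam u heig hH
end

section
/- Let W ∈ ℝ^{n×n} be a symmetric random matrix whose entries (W_{ij})_{1≤i≤j≤n} are independent, with E[W_{ij}] = 0, Var(W_{ij}) ≤ σ², |W_{ij}| ≤ B almost surely, and each W_{ij} symmetric in distribution about 0. Let P_offdiag(A) denote the matrix obtained from A by setting all diagonal entries to 0. Then for any fixed unit vectors x, y ∈ ℝⁿ and any positive integer k: (a) E[ xᵀ P_offdiag(W^k) y ] = 0; and (b) if k is odd, E[ xᵀ W^k y ] = 0. -/
/-!
Multiplying the upper-triangular entries of `W` by fixed signs `s i j = s j i` does not change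
the law of `W`, by independence and the symmetry of each entry. Two instances matter: negation
`W ↦ -W`, which negates `xᵀ W^k y` for odd `k`, giving (b); and conjugation `W ↦ D W D` by a
diagonal sign matrix `D`, which commutes with powers and with `P_offdiag`. Averaging `D A D` over
all `2^n` sign matrices leaves `2^n` times the diagonal part of `A`, which vanishes for
`A = P_offdiag(W^k)`, giving (a).
-/

open MeasureTheory ProbabilityTheory Matrix

def Poffdiag {n : ℕ} (A : Matrix (Fin n) (Fin n) ℝ) : Matrix (Fin n) (Fin n) ℝ :=
  Matrix.of fun i j => if i = j then 0 else A i j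

theorem integral_eq_zero_of_sum_identDistrib_eq_zero {Ω J E : Type*} [MeasurableSpace Ω]
    {μ : Measure Ω} [Fintype J] [Nonempty J] [NormedAddCommGroup E] [NormedSpace ℝ E]
    [MeasurableSpace E] [BorelSpace E] {f : Ω → E} {F : J → Ω → E}
    (hF : ∀ j, IdentDistrib (F j) f μ μ) (hsum : ∀ ω, ∑ j, F j ω = 0) :
    ∫ ω, f ω ∂μ = 0 := by
  by_cases hf : Integrable f μ
  · have hsum_integral : (Fintype.card J : ℝ) • ∫ ω, f ω ∂μ = 0 := calc
      (Fintype.card J : ℝ) • ∫ ω, f ω ∂μ = ∑ j, ∫ ω, F j ω ∂μ := by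
        simp [(hF _).integral_eq, Finset.card_univ, Nat.cast_smul_eq_nsmul]
      _ = ∫ ω, ∑ j, F j ω ∂μ :=
        (integral_finsetSum _ fun j _ => (hF j).integrable_iff.mpr hf).symm
      _ = 0 := by simp [hsum]
    exact (smul_eq_zero.mp hsum_integral).resolve_left (by simp)
  · exact integral_undef hf

theorem identDistrib_units_mul {Ω : Type*} [MeasurableSpace Ω] {μ : Measure Ω} {X : Ω → ℝ}
    (hX : Measurable X) (hsgn : μ.map X = μ.map fun ω => -X ω) (u : ℤˣ) :
    IdentDistrib (fun ω => ((u : ℤ) : ℝ) * X ω) X μ μ := by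
  rcases Int.units_eq_one_or u with rfl | rfl
  · simpa using IdentDistrib.refl hX.aemeasurable
  · simpa using (⟨hX.neg.aemeasurable, hX.aemeasurable, hsgn.symm⟩ :
      IdentDistrib (fun ω => -X ω) X μ μ)

theorem Int.cast_units_mul_self {R : Type*} [Ring R] (u : ℤˣ) :
    ((u : ℤ) : R) * (u : ℤ) = 1 := by
  rcases Int.units_eq_one_or u with rfl | rfl <;> norm_num

namespace Matrix

variable {ι α : Type*}

def symmOfUpper [LinearOrder ι] (v : {q : ι × ι // q.1 ≤ q.2} → α) : Matrix ι ι α :=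
  of fun i j => if h : i ≤ j then v ⟨(i, j), h⟩ else v ⟨(j, i), le_of_not_ge h⟩

theorem symmOfUpper_upper [LinearOrder ι] {M : Matrix ι ι α} (hM : ∀ i j, M i j = M j i) :
    symmOfUpper (fun p => M p.1.1 p.1.2) = M := by
  ext i j
  by_cases h : i ≤ j <;> simp [symmOfUpper, h, hM j i]

theorem continuous_symmOfUpper [LinearOrder ι] [TopologicalSpace α] :
    Continuous (symmOfUpper (ι := ι) (α := α)) :=
  continuous_matrix fun i j => by
    by_cases h : i ≤ j <;> simpa [symmOfUpper, h] using continuous_apply _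

variable [Fintype ι]

def signFlip (s : Matrix ι ι ℤˣ) (M : Matrix ι ι ℝ) : Matrix ι ι ℝ :=
  of fun i j => ((s i j : ℤ) : ℝ) * M i j

variable [DecidableEq ι]

def signDiag (ε : ι → ℤˣ) : Matrix ι ι ℝ :=
  diagonal fun i => ((ε i : ℤ) : ℝ)

theorem signDiag_mul_self (ε : ι → ℤˣ) : signDiag ε * signDiag ε = 1 := by
  simp [signDiag, diagonal_mul_diagonal, Int.cast_units_mul_self]

theorem signDiag_mul_mul_signDiag_pow (ε : ι → ℤˣ) (M : Matrix ι ι ℝ) (k : ℕ) :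
    (signDiag ε * M * signDiag ε) ^ k = signDiag ε * M ^ k * signDiag ε :=
  Units.conj_pow ⟨_, _, signDiag_mul_self ε, signDiag_mul_self ε⟩ M k

theorem signDiag_mul_mul_signDiag (ε : ι → ℤˣ) (M : Matrix ι ι ℝ) :
    signDiag ε * M * signDiag ε = signFlip (of fun i j => ε i * ε j) M := by
  ext i j
  simp only [signDiag, mul_diagonal, diagonal_mul, signFlip, of_apply, Units.val_mul,
    Int.cast_mul]
  ring

theorem sum_units_apply_mul_apply {a b : ι} (hab : a ≠ b) :
    ∑ ε : ι → ℤˣ, ((ε a : ℤ) : ℝ) * (ε b : ℤ) = 0 := by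
  let χ : (ι → ℤˣ) →* ℤ :=
    (Units.coeHom ℤ).comp (Pi.evalMonoidHom (fun _ => ℤˣ) a * Pi.evalMonoidHom _ b)
  have hχ : χ ≠ 1 := fun h => by
    have := DFunLike.congr_fun h (Pi.mulSingle a (-1))
    simp [χ, hab.symm] at this
  have := sum_hom_units_eq_zero χ hχ
  exact_mod_cast this

theorem sum_signDiag_mul_mul_signDiag (A : Matrix ι ι ℝ) :
    ∑ ε : ι → ℤˣ, signDiag ε * A * signDiag ε = Fintype.card (ι → ℤˣ) • diagonal A.diag := by
  ext i j
  rw [sum_apply]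
  rcases eq_or_ne i j with rfl | hij
  · simp [signDiag, mul_right_comm _ (A i i), Int.cast_units_mul_self, Finset.card_univ]
  · simp only [signDiag, mul_diagonal, diagonal_mul, smul_apply, diagonal_apply_ne _ hij]
    simp_rw [mul_comm _ (A i j), mul_assoc, ← Finset.mul_sum, sum_units_apply_mul_apply hij]
    simp

end Matrix

theorem Poffdiag_signDiag_mul_mul_signDiag {n : ℕ} (ε : Fin n → ℤˣ)
    (A : Matrix (Fin n) (Fin n) ℝ) :
    Poffdiag (signDiag ε * A * signDiag ε) = signDiag ε * Poffdiag A * signDiag ε := by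
  ext i j
  by_cases h : i = j <;> simp [Poffdiag, signDiag, h]

theorem diag_Poffdiag {n : ℕ} (A : Matrix (Fin n) (Fin n) ℝ) : (Poffdiag A).diag = 0 := by
  ext i
  simp [Poffdiag]

theorem continuous_Poffdiag {n : ℕ} : Continuous (Poffdiag (n := n)) :=
  continuous_matrix fun i j => by
    simp only [Poffdiag, of_apply]
    split_ifs
    exacts [continuous_const, continuous_id.matrix_elem i j]

section SignInvariance

variable {Ω ι E : Type*} [MeasurableSpace Ω] {μ : Measure Ω} [Fintype ι] [LinearOrder ι]
  {W : Ω → Matrix ι ι ℝ}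
  (hsymm : ∀ ω i j, W ω i j = W ω j i)
  (hmeas : ∀ i j, Measurable fun ω => W ω i j)
  (hindep : iIndepFun (fun p : {q : ι × ι // q.1 ≤ q.2} => fun ω => W ω p.1.1 p.1.2) μ)
  (hsgn : ∀ i j, μ.map (fun ω => W ω i j) = μ.map (fun ω => -(W ω i j)))
include hsymm hmeas hindep hsgn

theorem identDistrib_signFlip [TopologicalSpace E] [MeasurableSpace E] [BorelSpace E]
    {h : Matrix ι ι ℝ → E} (hh : Continuous h) {s : Matrix ι ι ℤˣ} (hs : ∀ i j, s i j = s j i) :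
    IdentDistrib (fun ω => h (signFlip s (W ω))) (fun ω => h (W ω)) μ μ := by
  have hupper : IdentDistrib
      (fun ω (p : {q : ι × ι // q.1 ≤ q.2}) => signFlip s (W ω) p.1.1 p.1.2)
      (fun ω p => W ω p.1.1 p.1.2) μ μ :=
    IdentDistrib.pi (fun p => identDistrib_units_mul (hmeas _ _) (hsgn _ _) _)
      (hindep.comp _ fun p => measurable_const_mul _) hindep
  have hflip_symm : ∀ ω i j, signFlip s (W ω) i j = signFlip s (W ω) j i := fun ω i j => by
    simp [signFlip, hs i j, hsymm ω i j]
  convert hupper.comp (hh.comp continuous_symmOfUpper).measurable using 1 <;> ext ω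
  · simp [symmOfUpper_upper (hflip_symm ω)]
  · simp [symmOfUpper_upper (hsymm ω)]

variable [NormedAddCommGroup E] [NormedSpace ℝ E] [MeasurableSpace E] [BorelSpace E]
  {h : Matrix ι ι ℝ → E}

theorem integral_eq_zero_of_sum_signDiag_conj_eq_zero (hh : Continuous h)
    (hsum : ∀ M, ∑ ε : ι → ℤˣ, h (signDiag ε * M * signDiag ε) = 0) :
    ∫ ω, h (W ω) ∂μ = 0 :=
  integral_eq_zero_of_sum_identDistrib_eq_zero
    (F := fun ε ω => h (signDiag ε * W ω * signDiag ε))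
    (fun ε => by
      simpa only [signDiag_mul_mul_signDiag] using
        identDistrib_signFlip hsymm hmeas hindep hsgn hh (s := of fun i j => ε i * ε j)
          fun i j => mul_comm (ε i) (ε j))
    (fun ω => hsum (W ω))

theorem integral_eq_zero_of_map_neg (hh : Continuous h) (hneg : ∀ M, h (-M) = -h M) :
    ∫ ω, h (W ω) ∂μ = 0 := by
  have hflip := (identDistrib_signFlip hsymm hmeas hindep hsgn hh
    (s := of fun _ _ => -1) fun _ _ => rfl).integral_eq
  have hneg_one : ∀ M : Matrix ι ι ℝ, signFlip (of fun _ _ => -1) M = -M := fun M => by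
    ext i j
    simp [signFlip]
  simp only [hneg_one, hneg, integral_neg] at hflip
  linear_combination (norm := module) (-(1 / 2 : ℝ)) • hflip

end SignInvariance

theorem stmt9_general {Ω : Type} [MeasurableSpace Ω] (μ : Measure Ω)
    {n : ℕ} (W : Ω → Matrix (Fin n) (Fin n) ℝ)
    (hsymm : ∀ ω i j, W ω i j = W ω j i)
    (hmeas : ∀ i j, Measurable fun ω => W ω i j)
    (hindep : iIndepFun
      (fun p : {q : Fin n × Fin n // q.1 ≤ q.2} => fun ω => W ω p.1.1 p.1.2) μ)
    (hsgn : ∀ i j, Measure.map (fun ω => W ω i j) μ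
      = Measure.map (fun ω => -(W ω i j)) μ)
    (x y : Fin n → ℝ)
    (k : ℕ) :
    (∫ ω, x ⬝ᵥ (Poffdiag (W ω ^ k)).mulVec y ∂μ = 0) ∧
    (Odd k → ∫ ω, x ⬝ᵥ (W ω ^ k).mulVec y ∂μ = 0) := by
  have hpow : Continuous fun M : Matrix (Fin n) (Fin n) ℝ => M ^ k := continuous_pow k
  constructor
  · refine integral_eq_zero_of_sum_signDiag_conj_eq_zero hsymm hmeas hindep hsgn
      (continuous_const.dotProduct ((continuous_Poffdiag.comp hpow).matrix_mulVec continuous_const))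
      fun M => ?_
    simp only [Function.comp_apply, signDiag_mul_mul_signDiag_pow,
      Poffdiag_signDiag_mul_mul_signDiag]
    rw [← dotProduct_sum, ← sum_mulVec, sum_signDiag_mul_mul_signDiag, diag_Poffdiag]
    simp
  · intro hodd
    exact integral_eq_zero_of_map_neg hsymm hmeas hindep hsgn
      (continuous_const.dotProduct (hpow.matrix_mulVec continuous_const))
      fun M => by simp [hodd.neg_pow, neg_mulVec]

/-- Lemma 2, parts (a),(b): for symmetric noise `W` with independent,
centered, bounded upper-triangular entries symmetric about 0, and unit vectors `x, y`:
(a) `E[xᵀ P_offdiag(W^k) y] = 0`; (b) if `k` is odd then `E[xᵀ W^k y] = 0`. -/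
theorem stmt9 {Ω : Type} [MeasurableSpace Ω] (μ : Measure Ω) [IsProbabilityMeasure μ]
    {n : ℕ} (W : Ω → Matrix (Fin n) (Fin n) ℝ) (σ B : ℝ)
    (hsymm : ∀ ω i j, W ω i j = W ω j i)
    (hmeas : ∀ i j, Measurable fun ω => W ω i j)
    (hindep : iIndepFun
      (fun p : {q : Fin n × Fin n // q.1 ≤ q.2} => fun ω => W ω p.1.1 p.1.2) μ)
    (hmean : ∀ i j, ∫ ω, W ω i j ∂μ = 0)
    (hvar : ∀ i j, ∫ ω, (W ω i j) ^ 2 ∂μ ≤ σ ^ 2)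
    (hbdd : ∀ i j, ∀ᵐ ω ∂μ, |W ω i j| ≤ B)
    (hsgn : ∀ i j, Measure.map (fun ω => W ω i j) μ
      = Measure.map (fun ω => -(W ω i j)) μ)
    (x y : Fin n → ℝ) (hx : (∑ i, x i ^ 2) = 1) (hy : (∑ i, y i ^ 2) = 1)
    (k : ℕ) (hk : 0 < k) :
    (∫ ω, x ⬝ᵥ (Poffdiag (W ω ^ k)).mulVec y ∂μ = 0) ∧
    (Odd k → ∫ ω, x ⬝ᵥ (W ω ^ k).mulVec y ∂μ = 0) :=
  stmt9_general μ W hsymm hmeas hindep hsgn x y k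
end

section
/- Let {H_{ij} : 1 ≤ i,j ≤ n} be independent real random variables with E[H_{ij}] = 0, E[H_{ij}²] ≤ σ², and |H_{ij}| ≤ B almost surely. Let k ≥ 2 and p ≥ 1 be integers, and for each r ∈ [p] let j^{(r)} ∈ [n]^{k+1}, with ζ_r := H_{j^{(r)}_1 j^{(r)}_2} ⋯ H_{j^{(r)}_k j^{(r)}_{k+1}}. Suppose that among the pk index pairs { (j^{(r)}_l, j^{(r)}_{l+1}) : r ∈ [p], l ∈ [k] } there are exactly L distinct ordered pairs and each of these L distinct pairs occurs at least twice. Then | E[ ∏_{r=1}^{p} ( ζ_r − E[ζ_r] ) ] | ≤ 2^p σ^{2L} B^{pk − 2L}. -/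
/-!
Expanding the product of centred factors gives `2 ^ p` terms
`E[∏_{r ∈ t} ζ_r] · ∏_{r ∉ t} (-E ζ_r)`. Each `ζ_r` is a monomial in the independent entries, so
every term factorises over the distinct pairs `q` into a product of moments `E[H_q ^ m]` whose
exponents add up to the multiplicity `M_q ≥ 2` of `q`. Because `E H_q = 0` and `|H_q| ≤ B`, such a
product vanishes if some exponent is `1`, and otherwise one exponent is at least `2`, so it is at
most `E[H_q²] B^(M_q - 2) ≤ σ² B^(M_q - 2)`. Multiplying over the `L` pairs gives
`σ^(2L) B^(pk - 2L)`.
-/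


open MeasureTheory ProbabilityTheory Finset

section Moments

variable {Ω : Type*} [MeasurableSpace Ω] {μ : Measure Ω} {X : Ω → ℝ} {B : ℝ}

lemma integrable_pow_of_ae_abs_le [IsFiniteMeasure μ] (hX : AEMeasurable X μ)
    (hB : ∀ᵐ ω ∂μ, |X ω| ≤ B) (m : ℕ) : Integrable (fun ω => X ω ^ m) μ :=
  .of_bound (hX.pow_const m).aestronglyMeasurable (B ^ m) <| by
    filter_upwards [hB] with ω hω
    rw [Real.norm_eq_abs, abs_pow]
    exact pow_le_pow_left₀ (abs_nonneg _) hω m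

lemma abs_moment_le_pow [IsProbabilityMeasure μ] (hB : ∀ᵐ ω ∂μ, |X ω| ≤ B) (m : ℕ) :
    |moment X m μ| ≤ B ^ m := by
  rw [← Real.norm_eq_abs]
  simpa [moment] using norm_integral_le_of_norm_le_const (μ := μ) (f := fun ω => X ω ^ m) <| by
    filter_upwards [hB] with ω hω
    rw [Real.norm_eq_abs, abs_pow]
    exact pow_le_pow_left₀ (abs_nonneg _) hω m

lemma abs_moment_le_moment_two_mul_pow [IsFiniteMeasure μ] (hX : AEMeasurable X μ)
    (hB : ∀ᵐ ω ∂μ, |X ω| ≤ B) {m : ℕ} (hm : 2 ≤ m) :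
    |moment X m μ| ≤ moment X 2 μ * B ^ (m - 2) := by
  calc |moment X m μ| ≤ ∫ ω, |X ω ^ m| ∂μ := abs_integral_le_integral_abs
    _ ≤ ∫ ω, X ω ^ 2 * B ^ (m - 2) ∂μ := by
      refine integral_mono_ae (integrable_pow_of_ae_abs_le hX hB m).abs
        ((integrable_pow_of_ae_abs_le hX hB 2).mul_const _) ?_
      filter_upwards [hB] with ω hω
      have hsplit : |X ω ^ m| = X ω ^ 2 * |X ω| ^ (m - 2) := by
        rw [abs_pow, ← sq_abs, ← pow_add, Nat.add_sub_cancel' hm]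
      rw [hsplit]
      gcongr
    _ = moment X 2 μ * B ^ (m - 2) := integral_mul_const _ _

lemma prod_abs_moment_le [IsProbabilityMeasure μ] (hX : AEMeasurable X μ) (hmean : μ[X] = 0)
    (hB : ∀ᵐ ω ∂μ, |X ω| ≤ B) {α : Type*} (s : Finset α) (b : α → ℕ)
    (hb : 2 ≤ ∑ r ∈ s, b r) :
    ∏ r ∈ s, |moment X (b r) μ| ≤ moment X 2 μ * B ^ (∑ r ∈ s, b r - 2) := by
  classical
  have hB₀ : 0 ≤ B := hB.exists.elim fun ω hω => (abs_nonneg _).trans hω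
  have hm₂ : 0 ≤ moment X 2 μ := integral_nonneg fun ω => sq_nonneg (X ω)
  by_cases hone : ∃ r ∈ s, b r = 1
  · obtain ⟨r, hr, hbr⟩ := hone
    rw [prod_eq_zero hr (by rw [hbr, moment_one, hmean, abs_zero])]
    positivity
  push Not at hone
  obtain ⟨r₀, hr₀, hbr₀⟩ := exists_ne_zero_of_sum_ne_zero (by omega : ∑ r ∈ s, b r ≠ 0)
  have htwo : 2 ≤ b r₀ := by have := hone r₀ hr₀; omega
  rw [← mul_prod_erase s _ hr₀, ← add_sum_erase s b hr₀]
  calc |moment X (b r₀) μ| * ∏ r ∈ s.erase r₀, |moment X (b r) μ|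
      ≤ moment X 2 μ * B ^ (b r₀ - 2) * ∏ r ∈ s.erase r₀, B ^ b r := by
        refine mul_le_mul (abs_moment_le_moment_two_mul_pow hX hB htwo)
          (prod_le_prod (fun _ _ => abs_nonneg _) fun r _ => abs_moment_le_pow hB (b r))
          (by positivity) (by positivity)
    _ = moment X 2 μ * B ^ (b r₀ + ∑ r ∈ s.erase r₀, b r - 2) := by
        rw [prod_pow_eq_pow_sum, mul_assoc, ← pow_add, Nat.sub_add_comm htwo]

lemma abs_moment_mul_prod_abs_moment_le [IsProbabilityMeasure μ] (hX : AEMeasurable X μ)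
    (hmean : μ[X] = 0) (hB : ∀ᵐ ω ∂μ, |X ω| ≤ B) {α : Type*} (a : ℕ) (s : Finset α)
    (b : α → ℕ) (hab : 2 ≤ a + ∑ r ∈ s, b r) :
    |moment X a μ| * ∏ r ∈ s, |moment X (b r) μ|
      ≤ moment X 2 μ * B ^ (a + ∑ r ∈ s, b r - 2) := by
  simpa using prod_abs_moment_le hX hmean hB (insertNone s) (fun i => i.elim a b) (by simpa)

end Moments

section Monomials

variable {Ω ι : Type*} [MeasurableSpace Ω] {μ : Measure Ω} [Fintype ι] {X : ι → Ω → ℝ} {B : ℝ}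

lemma integrable_prod_pow_of_ae_abs_le [IsFiniteMeasure μ] (hX : ∀ i, AEMeasurable (X i) μ)
    (hB : ∀ i, ∀ᵐ ω ∂μ, |X i ω| ≤ B) (c : ι → ℕ) :
    Integrable (fun ω => ∏ i, X i ω ^ c i) μ :=
  .of_bound (aemeasurable_fun_prod _ fun i _ => (hX i).pow_const (c i)).aestronglyMeasurable
    (∏ i, B ^ c i) <| by
    filter_upwards [ae_all_iff.2 hB] with ω hω
    rw [Real.norm_eq_abs, abs_prod]
    exact prod_le_prod (fun i _ => abs_nonneg _) fun i _ => by
      rw [abs_pow]; exact pow_le_pow_left₀ (abs_nonneg _) (hω i) (c i)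

lemma ProbabilityTheory.iIndepFun.integral_prod_pow (hindep : iIndepFun X μ)
    (hX : ∀ i, AEMeasurable (X i) μ) (c : ι → ℕ) :
    ∫ ω, ∏ i, X i ω ^ c i ∂μ = ∏ i, moment (X i) (c i) μ :=
  hindep.integral_fun_prod_comp hX fun i => (continuous_pow (c i)).aestronglyMeasurable

end Monomials

lemma integral_prod_sub_integral_eq_sum {Ω κ : Type*} [MeasurableSpace Ω] {μ : Measure Ω}
    [Fintype κ] [DecidableEq κ] (Y : κ → Ω → ℝ)
    (hY : ∀ t : Finset κ, Integrable (fun ω => ∏ r ∈ t, Y r ω) μ) :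
    ∫ ω, ∏ r, (Y r ω - ∫ ω', Y r ω' ∂μ) ∂μ
      = ∑ t : Finset κ, (∫ ω, ∏ r ∈ t, Y r ω ∂μ) * ∏ r ∈ tᶜ, -∫ ω, Y r ω ∂μ := by
  simp_rw [sub_eq_add_neg, Fintype.prod_add]
  rw [integral_finsetSum _ fun t _ => (hY t).mul_const _]
  simp_rw [integral_mul_const]

section CenteredMonomials

variable {Ω ι κ : Type*} [MeasurableSpace Ω] {μ : Measure Ω} [IsProbabilityMeasure μ]
  [Fintype ι] [Fintype κ] {X : ι → Ω → ℝ} {σ B : ℝ}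

lemma abs_prod_moment_mul_prod_neg_le [DecidableEq κ] (hX : ∀ i, AEMeasurable (X i) μ)
    (hmean : ∀ i, ∫ ω, X i ω ∂μ = 0) (hvar : ∀ i, ∫ ω, X i ω ^ 2 ∂μ ≤ σ ^ 2)
    (hB : ∀ i, ∀ᵐ ω ∂μ, |X i ω| ≤ B) (ν : κ → ι → ℕ) (Q : Finset ι)
    (hQ : ∀ i ∉ Q, ∀ r, ν r i = 0) (hν : ∀ i ∈ Q, 2 ≤ ∑ r, ν r i) (t : Finset κ) :
    |(∏ i, moment (X i) (∑ r ∈ t, ν r i) μ) * ∏ r ∈ tᶜ, -∏ i, moment (X i) (ν r i) μ|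
      ≤ ∏ i ∈ Q, σ ^ 2 * B ^ (∑ r, ν r i - 2) := by
  simp_rw [abs_mul, abs_prod, abs_neg, abs_prod]
  rw [prod_comm (s := tᶜ), ← prod_mul_distrib]
  calc ∏ i, |moment (X i) (∑ r ∈ t, ν r i) μ| * ∏ r ∈ tᶜ, |moment (X i) (ν r i) μ|
      = ∏ i ∈ Q, |moment (X i) (∑ r ∈ t, ν r i) μ| * ∏ r ∈ tᶜ, |moment (X i) (ν r i) μ| := by
        refine (prod_subset (subset_univ Q) fun i _ hi => ?_).symm
        simp [hQ i hi, moment]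
    _ ≤ ∏ i ∈ Q, σ ^ 2 * B ^ (∑ r, ν r i - 2) := by
        refine prod_le_prod (fun _ _ => by positivity) fun i hi => ?_
        have hsplit := sum_add_sum_compl t (ν · i)
        have hB₀ : 0 ≤ B := (hB i).exists.elim fun ω hω => (abs_nonneg _).trans hω
        calc _ ≤ moment (X i) 2 μ * B ^ (∑ r, ν r i - 2) := by
              rw [← hsplit]
              exact abs_moment_mul_prod_abs_moment_le (hX i) (hmean i) (hB i) _ _ _
                (hsplit ▸ hν i hi)
          _ ≤ σ ^ 2 * B ^ (∑ r, ν r i - 2) := by gcongr; exact hvar i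

theorem abs_integral_prod_sub_integral_prod_pow_le (hindep : iIndepFun X μ)
    (hX : ∀ i, AEMeasurable (X i) μ)
    (hmean : ∀ i, ∫ ω, X i ω ∂μ = 0) (hvar : ∀ i, ∫ ω, X i ω ^ 2 ∂μ ≤ σ ^ 2)
    (hB : ∀ i, ∀ᵐ ω ∂μ, |X i ω| ≤ B) (ν : κ → ι → ℕ) (Q : Finset ι)
    (hQ : ∀ i ∉ Q, ∀ r, ν r i = 0) (hν : ∀ i ∈ Q, 2 ≤ ∑ r, ν r i) :
    |∫ ω, ∏ r, ((∏ i, X i ω ^ ν r i) - ∫ ω', ∏ i, X i ω' ^ ν r i ∂μ) ∂μ|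
      ≤ 2 ^ Fintype.card κ * ∏ i ∈ Q, σ ^ 2 * B ^ (∑ r, ν r i - 2) := by
  classical
  have hprod (t : Finset κ) (ω : Ω) :
      ∏ r ∈ t, ∏ i, X i ω ^ ν r i = ∏ i, X i ω ^ ∑ r ∈ t, ν r i := by
    rw [prod_comm]; simp_rw [prod_pow_eq_pow_sum]
  have hmoment (t : Finset κ) :
      ∫ ω, ∏ r ∈ t, ∏ i, X i ω ^ ν r i ∂μ = ∏ i, moment (X i) (∑ r ∈ t, ν r i) μ := by
    simp_rw [hprod, hindep.integral_prod_pow hX]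
  rw [integral_prod_sub_integral_eq_sum _ fun t => by
    simpa only [hprod] using integrable_prod_pow_of_ae_abs_le hX hB _]
  simp_rw [hmoment, hindep.integral_prod_pow hX]
  calc _ ≤ ∑ t : Finset κ, |(∏ i, moment (X i) (∑ r ∈ t, ν r i) μ) *
          ∏ r ∈ tᶜ, -∏ i, moment (X i) (ν r i) μ| := abs_sum_le_sum_abs _ _
    _ ≤ ∑ _t : Finset κ, ∏ i ∈ Q, σ ^ 2 * B ^ (∑ r, ν r i - 2) :=
        sum_le_sum fun t _ => abs_prod_moment_mul_prod_neg_le hX hmean hvar hB ν Q hQ hν t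
    _ = 2 ^ Fintype.card κ * ∏ i ∈ Q, σ ^ 2 * B ^ (∑ r, ν r i - 2) := by
        simp [Fintype.card_finset]

end CenteredMonomials

lemma prod_mul_pow_tsub_two {β R : Type*} [CommMonoid R] (Q : Finset β) (M : β → ℕ)
    (hM : ∀ q ∈ Q, 2 ≤ M q) (a b : R) :
    ∏ q ∈ Q, a * b ^ (M q - 2) = a ^ #Q * b ^ (∑ q ∈ Q, M q - 2 * #Q) := by
  rw [prod_mul_distrib, prod_const, prod_pow_eq_pow_sum, sum_tsub_distrib _ hM, sum_const,
    smul_eq_mul, mul_comm #Q 2]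

section Paths

variable {α : Type*} {p k : ℕ} (js : Fin p → Fin (k + 1) → α)

def pathEdge (x : Fin p × Fin k) : α × α := (js x.1 x.2.castSucc, js x.1 x.2.succ)

variable [DecidableEq α]

def edgeCount (r : Fin p) (q : α × α) : ℕ := #{l | pathEdge js (r, l) = q}

lemma prod_path_eq_prod_pow_edgeCount [Fintype α] {M : Type*} [CommMonoid M]
    (f : α → α → M) (r : Fin p) :
    ∏ l : Fin k, f (js r l.castSucc) (js r l.succ) = ∏ q, f q.1 q.2 ^ edgeCount js r q := by
  have h := prod_fiberwise' univ (fun l => pathEdge js (r, l)) fun q => f q.1 q.2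
  simp only [prod_const] at h
  exact h.symm

lemma sum_edgeCount (q : α × α) : ∑ r, edgeCount js r q = #{x | pathEdge js x = q} := by
  rw [card_filter, Fintype.sum_prod_type]
  simp only [edgeCount, card_filter]

lemma edgeCount_eq_zero_of_notMem {q : α × α} (hq : q ∉ univ.image (pathEdge js))
    (r : Fin p) : edgeCount js r q = 0 :=
  card_eq_zero.2 <| filter_eq_empty_iff.2 fun _ _ hl =>
    hq (hl ▸ mem_image_of_mem _ (mem_univ _))

lemma sum_image_sum_edgeCount :
    ∑ q ∈ univ.image (pathEdge js), ∑ r, edgeCount js r q = p * k := by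
  simp_rw [sum_edgeCount, ← card_eq_sum_card_image, card_univ, Fintype.card_prod,
    Fintype.card_fin]

lemma ncard_setOf_pathEdge :
    {ab : α × α | ∃ (r : Fin p) (l : Fin k), (js r l.castSucc, js r l.succ) = ab}.ncard
      = #(univ.image (pathEdge js)) := by
  rw [← Set.ncard_coe_finset]
  congr 1
  ext q
  simp [pathEdge]

end Paths

theorem stmt16_general {Ω : Type} [MeasurableSpace Ω] (μ : Measure Ω) [IsProbabilityMeasure μ]
    {n : ℕ} (H : Fin n → Fin n → Ω → ℝ)
    (hmeas : ∀ i j, Measurable (H i j))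
    (hindep : iIndepFun
      (fun q : Fin n × Fin n => H q.1 q.2) μ)
    (hmean : ∀ i j, ∫ ω, H i j ω ∂μ = 0)
    (σ B : ℝ)
    (hvar : ∀ i j, ∫ ω, (H i j ω) ^ 2 ∂μ ≤ σ ^ 2)
    (hbdd : ∀ i j, ∀ᵐ ω ∂μ, |H i j ω| ≤ B)
    (k p : ℕ)
    (js : Fin p → Fin (k + 1) → Fin n)
    (L : ℕ)
    (hL : {ab : Fin n × Fin n | ∃ (r : Fin p) (l : Fin k),
      (js r l.castSucc, js r l.succ) = ab}.ncard = L)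
    (hmult : ∀ (r : Fin p) (l : Fin k),
      2 ≤ Set.ncard {q : Fin p × Fin k |
        (js q.1 q.2.castSucc, js q.1 q.2.succ)
          = (js r l.castSucc, js r l.succ)}) :
    |∫ ω, ∏ r : Fin p,
        ((∏ l : Fin k, H (js r l.castSucc) (js r l.succ) ω)
          - ∫ ω', ∏ l : Fin k, H (js r l.castSucc) (js r l.succ) ω' ∂μ) ∂μ|
      ≤ 2 ^ p * σ ^ (2 * L) * B ^ (p * k - 2 * L) := by
  have htwo : ∀ q ∈ univ.image (pathEdge js), 2 ≤ ∑ r, edgeCount js r q := by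
    intro q hq
    obtain ⟨x, -, rfl⟩ := mem_image.1 hq
    have h := hmult x.1 x.2
    rw [Set.ncard_eq_toFinset_card', Set.toFinset_ofPred] at h
    rw [sum_edgeCount]
    exact h
  have hpath (r : Fin p) (ω : Ω) :=
    prod_path_eq_prod_pow_edgeCount js (fun a b => H a b ω) r
  simp_rw [hpath]
  refine (abs_integral_prod_sub_integral_prod_pow_le hindep
    (fun q => (hmeas q.1 q.2).aemeasurable) (fun q => hmean q.1 q.2) (fun q => hvar q.1 q.2)
    (fun q => hbdd q.1 q.2) (edgeCount js) _ (fun _ => edgeCount_eq_zero_of_notMem js)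
    htwo).trans_eq ?_
  rw [prod_mul_pow_tsub_two _ _ htwo, sum_image_sum_edgeCount, ← ncard_setOf_pathEdge, hL,
    Fintype.card_fin, pow_mul, mul_assoc]

/-- for independent, centered entries `H i j` with second moment at most
`σ²` and `|H i j| ≤ B` a.s., if the `p·k` index pairs of the paths `js` comprise exactly
`L` distinct ordered pairs, each occurring at least twice, then
`|E[∏_r (ζ_r − E ζ_r)]| ≤ 2^p σ^{2L} B^{pk − 2L}`. -/
theorem stmt16 {Ω : Type} [MeasurableSpace Ω] (μ : Measure Ω) [IsProbabilityMeasure μ]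
    {n : ℕ} (H : Fin n → Fin n → Ω → ℝ)
    (hmeas : ∀ i j, Measurable (H i j))
    (hindep : iIndepFun
      (fun q : Fin n × Fin n => H q.1 q.2) μ)
    (hmean : ∀ i j, ∫ ω, H i j ω ∂μ = 0)
    (σ B : ℝ)
    (hvar : ∀ i j, ∫ ω, (H i j ω) ^ 2 ∂μ ≤ σ ^ 2)
    (hbdd : ∀ i j, ∀ᵐ ω ∂μ, |H i j ω| ≤ B)
    (k p : ℕ) (hk : 2 ≤ k) (hp : 1 ≤ p)
    (js : Fin p → Fin (k + 1) → Fin n)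
    (L : ℕ)
    (hL : {ab : Fin n × Fin n | ∃ (r : Fin p) (l : Fin k),
      (js r l.castSucc, js r l.succ) = ab}.ncard = L)
    (hmult : ∀ (r : Fin p) (l : Fin k),
      2 ≤ Set.ncard {q : Fin p × Fin k |
        (js q.1 q.2.castSucc, js q.1 q.2.succ)
          = (js r l.castSucc, js r l.succ)}) :
    |∫ ω, ∏ r : Fin p,
        ((∏ l : Fin k, H (js r l.castSucc) (js r l.succ) ω)
          - ∫ ω', ∏ l : Fin k, H (js r l.castSucc) (js r l.succ) ω' ∂μ) ∂μ|
      ≤ 2 ^ p * σ ^ (2 * L) * B ^ (p * k - 2 * L) :=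
  stmt16_general μ H hmeas hindep hmean σ B hvar hbdd k p js L hL hmult
end

section
/- For all positive integers m and L with L ≤ m, the number of set partitions of an m-element set into exactly L nonempty blocks, each block having even cardinality, is at most 2^m · L^{m − L}. -/
/-!
Send each element to the minimum of its block. This map determines the partition, and it is a
retraction of the ground set onto the set `S` of block minima, which has one element per block.
A partition into `L` blocks is therefore recorded by an `L`-subset `S` (at most `2^m` choices)
together with a map from the other `m - L` elements into `S` (`L^(m-L)` choices).
-/

open Finset Function

def Finset.retractionsOnto {α : Type*} [Fintype α] [DecidableEq α] (S : Finset α) :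
    Finset (α → α) :=
  Fintype.piFinset fun x => if x ∈ S then {x} else S

lemma Finset.card_retractionsOnto {α : Type*} [Fintype α] [DecidableEq α] (S : Finset α) :
    #S.retractionsOnto = #S ^ (Fintype.card α - #S) := by
  simp only [retractionsOnto, Fintype.card_piFinset, apply_ite card, card_singleton]
  rw [prod_ite, prod_const_one, one_mul, prod_const,
    filter_notMem_eq_sdiff, ← compl_eq_univ_sdiff, card_compl]

namespace Finpartition

section

variable {α : Type*} [DecidableEq α] {s : Finset α}

lemma parts_eq_image_part (P : Finpartition s) : P.parts = s.image P.part := by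
  ext b
  refine ⟨fun hb => ?_, fun hb => ?_⟩
  · obtain ⟨x, hx, rfl⟩ := P.part_surjOn hb
    exact mem_image_of_mem _ hx
  · obtain ⟨x, hx, rfl⟩ := mem_image.1 hb
    exact P.part_mem.2 hx

lemma part_injective : Injective (part : Finpartition s → α → Finset α) :=
  fun P Q h => Finpartition.ext <| by rw [parts_eq_image_part, parts_eq_image_part, h]

end

variable {α : Type*} [Fintype α] [LinearOrder α]

def leader (P : Finpartition (univ : Finset α)) (x : α) : α :=
  (P.part x).min' (P.part_nonempty.2 (mem_univ x))

variable (P : Finpartition (univ : Finset α))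

lemma leader_mem_part (x : α) : P.leader x ∈ P.part x :=
  min'_mem _ _

lemma part_leader (x : α) : P.part (P.leader x) = P.part x :=
  P.part_eq_of_mem (P.part_mem.2 (mem_univ x)) (P.leader_mem_part x)

lemma leader_eq_leader_iff {x y : α} : P.leader x = P.leader y ↔ P.part x = P.part y := by
  refine ⟨fun h => by rw [← P.part_leader x, h, P.part_leader], fun h => ?_⟩
  unfold leader
  congr 1

lemma leader_leader (x : α) : P.leader (P.leader x) = P.leader x :=
  P.leader_eq_leader_iff.2 (P.part_leader x)

lemma leader_injective :
    Injective (leader : Finpartition (univ : Finset α) → α → α) := by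
  intro P Q h
  refine part_injective (funext fun x => Finset.ext fun y => ?_)
  simp only [P.mem_part_iff_part_eq_part (mem_univ y) (mem_univ x),
    Q.mem_part_iff_part_eq_part (mem_univ y) (mem_univ x), ← leader_eq_leader_iff, h]

def leaders : Finset α :=
  univ.filter fun x => P.leader x = x

lemma leader_mem_leaders (x : α) : P.leader x ∈ P.leaders :=
  mem_filter.2 ⟨mem_univ _, P.leader_leader x⟩

lemma card_leaders : #P.leaders = #P.parts := by
  refine card_bij (fun x _ => P.part x) (fun x _ => P.part_mem.2 (mem_univ x)) ?_ ?_
  · intro x hx y hy hxy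
    rw [← (mem_filter.1 hx).2, ← (mem_filter.1 hy).2]
    exact P.leader_eq_leader_iff.2 hxy
  · intro b hb
    obtain ⟨x, hx⟩ := P.nonempty_of_mem_parts hb
    exact ⟨P.leader x, P.leader_mem_leaders x, (P.part_leader x).trans (P.part_eq_of_mem hb hx)⟩

lemma leader_mem_retractionsOnto_leaders : P.leader ∈ P.leaders.retractionsOnto := by
  refine Fintype.mem_piFinset.2 fun x => ?_
  split_ifs with hx
  · exact mem_singleton.2 (mem_filter.1 hx).2
  · exact P.leader_mem_leaders x

end Finpartition

theorem Finpartition.ncard_card_parts_eq_le {α : Type*} [Fintype α] [LinearOrder α] (L : ℕ) :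
    {P : Finpartition (univ : Finset α) | #P.parts = L}.ncard
      ≤ (Fintype.card α).choose L * L ^ (Fintype.card α - L) := by
  set T : Finset (α → α) := (powersetCard L univ).biUnion retractionsOnto
  have hmem : ∀ P ∈ {P : Finpartition (univ : Finset α) | #P.parts = L},
      P.leader ∈ (T : Set (α → α)) := by
    intro P hP
    refine mem_biUnion.2 ⟨P.leaders, mem_powersetCard.2 ⟨subset_univ _, ?_⟩,
      P.leader_mem_retractionsOnto_leaders⟩
    rw [P.card_leaders, hP]
  calc _ ≤ #T := (Set.ncard_le_ncard_of_injOn _ hmem leader_injective.injOn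
          (Set.toFinite _)).trans_eq (Set.ncard_coe_finset T)
    _ ≤ ∑ S ∈ powersetCard L (univ : Finset α), #S.retractionsOnto := card_biUnion_le
    _ = _ := by
      rw [sum_congr rfl fun S hS => by rw [card_retractionsOnto, (mem_powersetCard.1 hS).2],
        sum_const, card_powersetCard, card_univ, smul_eq_mul]

theorem stmt17_general (m L : ℕ) :
    {P : Finpartition (Finset.univ : Finset (Fin m)) |
        P.parts.card = L ∧ ∀ b ∈ P.parts, Even b.card}.ncard
      ≤ 2 ^ m * L ^ (m - L) :=
  calc _ ≤ {P : Finpartition (univ : Finset (Fin m)) | #P.parts = L}.ncard :=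
        Set.ncard_le_ncard fun _ hP => hP.1
    _ ≤ m.choose L * L ^ (m - L) := by
        simpa using Finpartition.ncard_card_parts_eq_le (α := Fin m) L
    _ ≤ 2 ^ m * L ^ (m - L) := Nat.mul_le_mul_right _ (Nat.choose_le_two_pow m L)

/-- the number of set partitions of an `m`-element set into exactly `L`
nonempty blocks, each of even cardinality, is at most `2^m · L^{m−L}`. -/
theorem stmt17 (m L : ℕ) (hm : 0 < m) (hL : 0 < L) (hLm : L ≤ m) :
    {P : Finpartition (Finset.univ : Finset (Fin m)) |
        P.parts.card = L ∧ ∀ b ∈ P.parts, Even b.card}.ncard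
      ≤ 2 ^ m * L ^ (m - L) :=
  stmt17_general m L
end

section
/- Let Γ be a connected undirected graph on β vertices, and let each vertex v of Γ be assigned an ordered pair of colors (c₁(v), c₂(v)) from some color set, in such a way that any two adjacent vertices share at least one common color (meaning {c₁(u), c₂(u)} ∩ {c₁(v), c₂(v)} ≠ ∅ for every edge {u,v}). Then the total number of distinct colors appearing among all the pairs (c₁(v), c₂(v)), v ∈ V(Γ), is at most β + 1. -/
/-- if each vertex of a connected graph `Γ` on `β` vertices is assigned an
ordered pair of colors such that adjacent vertices share at least one color, then at
most `β + 1` distinct colors appear in total. -/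
theorem stmt18 {β : ℕ} {α : Type} (Γ : SimpleGraph (Fin β)) (hconn : Γ.Connected)
    (c₁ c₂ : Fin β → α)
    (hshare : ∀ u v : Fin β, Γ.Adj u v →
      (({c₁ u, c₂ u} : Set α) ∩ ({c₁ v, c₂ v} : Set α)).Nonempty) :
    (Set.range c₁ ∪ Set.range c₂).ncard ≤ β + 1 := by
  classical
  rcases Nat.eq_zero_or_pos β with hβ | hβ
  · subst hβ
    have h1 : Set.range c₁ = ∅ := Set.range_eq_empty c₁
    have h2 : Set.range c₂ = ∅ := Set.range_eq_empty c₂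
    simp [h1, h2]
  set C : Finset (Fin β) → Set α := fun S => c₁ '' ↑S ∪ c₂ '' ↑S with hC
  have hfin : ∀ S : Finset (Fin β), (C S).Finite := by
    intro S
    exact ((S.finite_toSet.image c₁).union (S.finite_toSet.image c₂))
  have hmain : ∀ n (S : Finset (Fin β)), S.Nonempty → β - S.card ≤ n →
      (C Finset.univ).ncard ≤ (C S).ncard + (β - S.card) := by
    intro n
    induction n with
    | zero =>
      intro S hS hle
      have hcard : S.card = β := by
        have := Finset.card_le_card (Finset.subset_univ S)
        simp [Fintype.card_fin] at this
        omega
      have hU : S = Finset.univ := Finset.eq_univ_of_card S (by simpa using hcard)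
      subst hU
      omega
    | succ n ih =>
      intro S hS hle
      by_cases hU : S = Finset.univ
      · subst hU; omega
      · -- find a boundary edge
        obtain ⟨u, hu⟩ := hS
        obtain ⟨v, hv⟩ : ∃ v, v ∉ S := by
          by_contra h
          push_neg at h
          exact hU (Finset.eq_univ_iff_forall.mpr h)
        obtain ⟨p⟩ := hconn.preconnected u v
        obtain ⟨d, _, hd1, hd2⟩ := p.exists_boundary_dart (↑S) (by exact_mod_cast hu)
          (by exact_mod_cast hv)
        set a := d.fst with ha
        set w := d.snd with hw
        have haS : a ∈ S := by exact_mod_cast hd1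
        have hwS : w ∉ S := by exact_mod_cast hd2
        have hadj : Γ.Adj a w := d.adj
        have hcardS : S.card < β := by
          have := Finset.card_lt_card (Finset.ssubset_univ_iff.mpr hU)
          simpa using this
        set S' := insert w S with hS'
        have hcard' : S'.card = S.card + 1 := Finset.card_insert_of_notMem hwS
        -- one of w's colors is already in C S
        obtain ⟨x, hx1, hx2⟩ := hshare a w hadj
        have hxCS : x ∈ C S := by
          rcases hx1 with h | h
          · exact Or.inl ⟨a, haS, h.symm⟩
          · exact Or.inr ⟨a, haS, h.symm⟩
        have hsub : C S' ⊆ C S ∪ {c₁ w, c₂ w} := by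
          intro y hy
          rcases hy with ⟨z, hz, rfl⟩ | ⟨z, hz, rfl⟩
          · rcases Finset.mem_insert.mp (by exact_mod_cast hz) with rfl | hzS
            · exact Or.inr (Or.inl rfl)
            · exact Or.inl (Or.inl ⟨z, hzS, rfl⟩)
          · rcases Finset.mem_insert.mp (by exact_mod_cast hz) with rfl | hzS
            · exact Or.inr (Or.inr rfl)
            · exact Or.inl (Or.inr ⟨z, hzS, rfl⟩)
        have hsub2 : C S ∪ {c₁ w, c₂ w} ⊆ C S ∪ (if x = c₁ w then {c₂ w} else {c₁ w}) := by
          intro y hy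
          rcases hy with h | h
          · exact Or.inl h
          · rcases h with rfl | rfl
            · by_cases hxc : x = c₁ w
              · exact Or.inl (hxc ▸ hxCS)
              · simp only [hxc, if_false]
                rcases hx2 with h' | h'
                · exact absurd h' hxc
                · -- x = c₂ w, y = c₁ w
                  exact Or.inr rfl
            · by_cases hxc : x = c₁ w
              · simp only [hxc, if_true]
                exact Or.inr rfl
              · rcases hx2 with h' | h'
                · exact absurd h' hxc
                · exact Or.inl (h' ▸ hxCS)
          
        have hkey : (C S').ncard ≤ (C S).ncard + 1 := by
          have hf2 : (if x = c₁ w then ({c₂ w} : Set α) else {c₁ w}).Finite := by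
            split <;> exact Set.finite_singleton _
          calc (C S').ncard ≤ (C S ∪ (if x = c₁ w then {c₂ w} else {c₁ w})).ncard :=
                Set.ncard_le_ncard (fun y hy => hsub2 (hsub hy)) ((hfin S).union hf2)
            _ ≤ (C S).ncard + (if x = c₁ w then ({c₂ w} : Set α) else {c₁ w}).ncard :=
                Set.ncard_union_le _ _
            _ ≤ (C S).ncard + 1 := by
                gcongr
                split <;> simp
        have h1 := ih S' ⟨w, Finset.mem_insert_self w S⟩ (by omega)
        calc (C Finset.univ).ncard ≤ (C S').ncard + (β - S'.card) := h1
          _ ≤ ((C S).ncard + 1) + (β - S'.card) := by omega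
          _ ≤ (C S).ncard + (β - S.card) := by omega
  -- apply with a singleton
  have h0 : β - 1 ≤ β - 1 := le_refl _
  have := hmain (β - 1) {⟨0, hβ⟩} ⟨_, Finset.mem_singleton_self _⟩ (by simp)
  have hCuniv : C Finset.univ = Set.range c₁ ∪ Set.range c₂ := by
    simp [hC, Set.image_univ]
  have hCsing : (C {⟨0, hβ⟩}).ncard ≤ 2 := by
    have : C {⟨0, hβ⟩} ⊆ {c₁ ⟨0, hβ⟩, c₂ ⟨0, hβ⟩} := by
      intro y hy
      rcases hy with ⟨z, hz, rfl⟩ | ⟨z, hz, rfl⟩ <;>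
        simp_all
    calc (C {⟨0, hβ⟩}).ncard ≤ ({c₁ ⟨0, hβ⟩, c₂ ⟨0, hβ⟩} : Set α).ncard :=
          Set.ncard_le_ncard this (Set.toFinite _)
      _ ≤ 2 := Set.ncard_insert_le _ _ |>.trans (by simp)
  rw [hCuniv] at this
  simp at this
  omega
end
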